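/- arXiv:2005.03287 — 2 statements merged into one kernel-verified Lean document; each statement's English description precedes it below -/
import Mathlib

section
/- If A + B is nonsingular, then x solves the GAVE Ax + B|x| = b if and only if, setting x⁺ = |x| + x and x⁻ = |x| − x, one has x⁺ = (A+B)^{-1}(A−B)x⁻ + 2(A+B)^{-1}b, with x⁺ ≥ 0, x⁻ ≥ 0 and (x⁺)ᵀx⁻ = 0; i.e., the GAVE is equivalent to a linear complementarity problem with matrix M = (A+B)^{-1}(A−B) and q = 2(A+B)^{-1}b. -/
open Matrix

/-- A square real matrix is a `P`-matrix if all of its principal minors are positive. -/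
def IsPMatrix {n : ℕ} (M : Matrix (Fin n) (Fin n) ℝ) : Prop :=
  ∀ s : Finset (Fin n), s.Nonempty →
    0 < (M.submatrix (fun i : s => (i : Fin n)) (fun i : s => (i : Fin n))).det

/-- The (unordered) singular values of a real square matrix: square roots of the
eigenvalues of `Aᵀ * A`. -/
noncomputable def singVals {n : ℕ} (A : Matrix (Fin n) (Fin n) ℝ) : Fin n → ℝ :=
  fun i => Real.sqrt (((by simpa [Matrix.conjTranspose_eq_transpose_of_trivial] using Matrix.isHermitian_conjTranspose_mul_self A : (Aᵀ * A).IsHermitian)).eigenvalues i)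

/-- `svalsDecr A i` is the `i`-th largest singular value of `A` (so `svalsDecr A 0 = σ₁`). -/
noncomputable def svalsDecr {n : ℕ} (A : Matrix (Fin n) (Fin n) ℝ) : Fin n → ℝ :=
  fun i => singVals A (Tuple.sort (singVals A) (Fin.rev i))

/-- The maximal singular value `σ₁`. -/
noncomputable def maxSV {n : ℕ} (A : Matrix (Fin n) (Fin n) ℝ) : ℝ :=
  ⨆ i, singVals A i

/-- The minimal singular value `σₙ`. -/
noncomputable def minSV {n : ℕ} (A : Matrix (Fin n) (Fin n) ℝ) : ℝ :=
  ⨅ i, singVals A i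

/-- The spectral radius of a real square matrix (as the spectral radius of its
complexification), valued in `ℝ≥0∞`. -/
noncomputable def specRad {n : ℕ} (A : Matrix (Fin n) (Fin n) ℝ) : ENNReal :=
  spectralRadius ℂ (A.map (Complex.ofReal))

/-! With `x⁺ = |x| + x` and `x⁻ = |x| - x` one has `(A + B) x⁺ - (A - B) x⁻ = 2 (A x + B |x|)`,
so the GAVE is the linear equation `(A + B) x⁺ = (A - B) x⁻ + 2 b`, solved for `x⁺` by inverting
`A + B`. The sign and complementarity conditions hold for every `x`, since
`x⁺ᵢ x⁻ᵢ = |xᵢ|² - xᵢ² = 0`. -/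

namespace Matrix

variable {m n K : Type*} [Fintype n]

theorem mulVec_eq_iff_eq_inv_mulVec [DecidableEq n] [CommRing K] {C : Matrix n n K}
    (hC : IsUnit C) {u v : n → K} : C *ᵥ u = v ↔ u = C⁻¹ *ᵥ v := by
  have hdet : IsUnit C.det := (isUnit_iff_isUnit_det C).mp hC
  constructor
  · rintro rfl
    rw [mulVec_mulVec, nonsing_inv_mul C hdet, one_mulVec]
  · rintro rfl
    rw [mulVec_mulVec, mul_nonsing_inv C hdet, one_mulVec]

theorem mulVec_add_mulVec_eq_iff [Field K] [NeZero (2 : K)] (A B : Matrix m n K)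
    (x u : n → K) (b : m → K) :
    A *ᵥ x + B *ᵥ u = b ↔ (A + B) *ᵥ (u + x) = (A - B) *ᵥ (u - x) + (2 : K) • b := by
  have hsplit : (A + B) *ᵥ (u + x) - (A - B) *ᵥ (u - x) = (2 : K) • (A *ᵥ x + B *ᵥ u) := by
    simp only [add_mulVec, sub_mulVec, mulVec_add, mulVec_sub, two_smul]
    abel
  rw [← sub_eq_iff_eq_add', hsplit, smul_right_inj two_ne_zero]

end Matrix

theorem abs_add_self_dotProduct_abs_sub_self {ι R : Type*} [Fintype ι] [CommRing R]
    [LinearOrder R] [IsStrictOrderedRing R] (x : ι → R) : (|x| + x) ⬝ᵥ (|x| - x) = 0 :=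
  Finset.sum_eq_zero fun i _ => by
    simp only [Pi.add_apply, Pi.sub_apply, Pi.abs_apply]
    rw [← mul_self_sub_mul_self, abs_mul_abs_self, sub_self]

theorem stmt5 {n : ℕ} (A B : Matrix (Fin n) (Fin n) ℝ) (hAB : IsUnit (A + B))
    (b x : Fin n → ℝ) :
    A *ᵥ x + B *ᵥ |x| = b ↔
      (|x| + x = ((A + B)⁻¹ * (A - B)) *ᵥ (|x| - x) + (2 : ℝ) • ((A + B)⁻¹ *ᵥ b) ∧
        0 ≤ |x| + x ∧ 0 ≤ |x| - x ∧ (|x| + x) ⬝ᵥ (|x| - x) = 0) := by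
  have hplus : 0 ≤ |x| + x := neg_le_iff_add_nonneg.mp (neg_le_abs x)
  have hminus : 0 ≤ |x| - x := sub_nonneg.mpr (le_abs_self x)
  rw [mulVec_add_mulVec_eq_iff, mulVec_eq_iff_eq_inv_mulVec hAB, mulVec_add, mulVec_mulVec,
    mulVec_smul, and_iff_left ⟨hplus, hminus, abs_add_self_dotProduct_abs_sub_self x⟩]
end

section
/- Let A, B ∈ ℝ^{n×n}. The GAVE Ax + B|x| = b has a unique solution for every b ∈ ℝ^n if and only if A − B + 2BD is nonsingular for every diagonal matrix D = diag(d_i) with 0 ≤ d_i ≤ 1. -/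
open Matrix

/-!
Write `F x = A x + B |x|`. Since `|x| - |y| = t (x - y)` with `|tᵢ| ≤ 1`, every difference
`F x - F y` is `(A + B diag t)(x - y)`, and with `t = 2d - 1` these are exactly the matrices
`A - B + 2 B D`. So if they are all nonsingular, compactness of the cube of `t`'s gives a uniform
bound `‖x - y‖ ≤ K ‖F x - F y‖`, which makes `F` injective. The same bound holds along the
homotopy `A x + s B |x|`, `s ∈ [0, 1]`; starting from the invertible `A`, Banach's fixed point
theorem carries surjectivity across steps of `s` short enough for the Lipschitz perturbation
`(Δs) B |x|` to be absorbed. Conversely, if `(A + B diag t) z = 0` with `z ≠ 0`, the vectors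
`u = z + t|z|` and `v = -z + t|z|` are distinct with `F u = F v`.
-/

open Function Set NNReal

theorem Function.Surjective.add_of_antilipschitzWith_of_lipschitzWith {X E : Type*}
    [MetricSpace X] [CompleteSpace X] [SeminormedAddCommGroup E] {f g : X → E} {Kf Kg : ℝ≥0}
    (hfs : Surjective f) (hf : AntilipschitzWith Kf f) (hg : LipschitzWith Kg g)
    (hK : Kf * Kg < 1) : Surjective (f + g) := by
  intro b
  have hbg : LipschitzWith Kg fun x => b - g x := by
    simpa using (LipschitzWith.const b).sub hg
  have hT : ContractingWith (Kf * Kg) fun x => surjInv hfs (b - g x) :=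
    ⟨hK, (hf.to_rightInverse (rightInverse_surjInv hfs)).comp hbg⟩
  obtain ⟨x₀, -⟩ := hfs b
  obtain ⟨x, hx, -⟩ := hT.exists_fixedPoint x₀ (edist_ne_top _ _)
  refine ⟨x, ?_⟩
  have hfx := surjInv_eq hfs (b - g x)
  rw [hx.eq] at hfx
  simp [hfx]

theorem Function.Surjective.add_of_antilipschitzWith_add_smul {X E : Type*}
    [MetricSpace X] [CompleteSpace X] [SeminormedAddCommGroup E] [NormedSpace ℝ E]
    {f g : X → E} {K Kg : ℝ≥0} (hfs : Surjective f)
    (hf : ∀ s ∈ Icc (0 : ℝ) 1, AntilipschitzWith K (f + s • g)) (hg : LipschitzWith Kg g) :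
    Surjective (f + g) := by
  obtain ⟨N, hN⟩ := exists_nat_gt (K * Kg)
  have hN0 : 0 < N := by exact_mod_cast (zero_le : (0 : ℝ≥0) ≤ K * Kg).trans_lt hN
  have hstep : K * (‖(N⁻¹ : ℝ)‖₊ * Kg) < 1 := by
    rw [nnnorm_inv, Real.nnnorm_natCast, mul_left_comm, ← div_eq_inv_mul,
      div_lt_one (by exact_mod_cast hN0)]
    exact hN
  have hsurj : ∀ k ≤ N, Surjective (f + ((k : ℝ) / N) • g) := by
    intro k hk
    induction k with
    | zero => simpa using hfs
    | succ k ih =>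
      have hsplit : f + (((k + 1 : ℕ) : ℝ) / N) • g = f + ((k : ℝ) / N) • g + (N⁻¹ : ℝ) • g := by
        rw [add_assoc, ← add_smul, Nat.cast_succ, add_div, div_eq_mul_inv 1, one_mul]
      have hkN : (k : ℝ) / N ∈ Icc (0 : ℝ) 1 :=
        ⟨by positivity, div_le_one_of_le₀ (by exact_mod_cast k.le_succ.trans hk) (by positivity)⟩
      rw [hsplit]
      exact (ih (k.le_succ.trans hk)).add_of_antilipschitzWith_of_lipschitzWith (hf _ hkN)
        ((lipschitzWith_smul _).comp hg) hstep
  simpa [div_self (Nat.cast_ne_zero.mpr hN0.ne' : (N : ℝ) ≠ 0)] using hsurj N le_rfl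

theorem Matrix.exists_norm_le_mul_norm_mulVec {m T : Type*} [Fintype m] [DecidableEq m]
    [TopologicalSpace T] {M : T → Matrix m m ℝ} (hM : Continuous M) {S : Set T}
    (hS : IsCompact S) (hunit : ∀ t ∈ S, IsUnit (M t)) :
    ∃ K : ℝ≥0, ∀ t ∈ S, ∀ v, ‖v‖ ≤ K * ‖M t *ᵥ v‖ := by
  have hpos : ∀ p ∈ S ×ˢ Metric.sphere (0 : m → ℝ) 1, 0 < ‖M p.1 *ᵥ p.2‖ := by
    rintro ⟨t, w⟩ ⟨ht, hw⟩
    refine norm_pos_iff.mpr fun h => ne_zero_of_mem_unit_sphere ⟨w, hw⟩ ?_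
    exact mulVec_injective_iff_isUnit.mpr (hunit t ht) (h.trans (mulVec_zero _).symm)
  obtain ⟨c, hc, hcS⟩ := (hS.prod (isCompact_sphere 0 1)).exists_forall_le'
    (hM.fst'.matrix_mulVec continuous_snd).norm.continuousOn hpos
  refine ⟨Real.toNNReal c⁻¹, fun t ht v => ?_⟩
  rcases eq_or_ne v 0 with rfl | hv
  · simp
  have hvpos : 0 < ‖v‖ := norm_pos_iff.mpr hv
  have hsphere : ‖v‖⁻¹ • v ∈ Metric.sphere (0 : m → ℝ) 1 := by
    simp [norm_smul, hvpos.ne']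
  have hcv := hcS (t, ‖v‖⁻¹ • v) ⟨ht, hsphere⟩
  rw [mulVec_smul, norm_smul, norm_inv, norm_norm, ← div_eq_inv_mul, le_div_iff₀ hvpos] at hcv
  rw [Real.coe_toNNReal _ (inv_nonneg.mpr hc.le), ← div_eq_inv_mul, le_div_iff₀ hc]
  linarith

theorem lipschitzWith_one_abs_pi {m : Type*} [Fintype m] :
    LipschitzWith 1 fun x : m → ℝ => |x| := by
  refine LipschitzWith.of_dist_le_mul fun x y => ?_
  rw [NNReal.coe_one, one_mul, dist_pi_le_iff dist_nonneg]
  exact fun i => (abs_abs_sub_abs_le_abs_sub (x i) (y i)).trans (dist_le_pi_dist x y i)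

theorem abs_add_mul_abs_self {t : ℝ} (ht : |t| ≤ 1) (z : ℝ) :
    |(z + t * |z|)| = |z| + t * z := by
  obtain ⟨ht₁, ht₂⟩ := abs_le.mp ht
  rcases le_total 0 z with hz | hz
  · rw [abs_of_nonneg hz, abs_of_nonneg (by nlinarith)]
  · rw [abs_of_nonpos hz, abs_of_nonpos (by nlinarith)]
    ring

theorem mem_Icc_neg_one_one_iff {m : Type*} {t : m → ℝ} :
    t ∈ Icc (-1 : m → ℝ) 1 ↔ ∀ i, |t i| ≤ 1 := by
  simp only [mem_Icc, Pi.le_def, abs_le, forall_and, Pi.neg_apply, Pi.one_apply]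

theorem forall_mem_Icc_neg_one_one_iff {m : Type*} {P : (m → ℝ) → Prop} :
    (∀ t ∈ Icc (-1 : m → ℝ) 1, P t) ↔
      ∀ d : m → ℝ, (∀ i, d i ∈ Icc (0 : ℝ) 1) → P ((2 : ℝ) • d - 1) := by
  refine ⟨fun h d hd => h _ (mem_Icc_neg_one_one_iff.mpr fun i => ?_), fun h t ht => ?_⟩
  · obtain ⟨h₀, h₁⟩ := hd i
    simp only [Pi.sub_apply, Pi.smul_apply, Pi.one_apply, smul_eq_mul, abs_le]
    constructor <;> linarith
  · have hd : ∀ i, ((2 : ℝ)⁻¹ • (t + 1)) i ∈ Icc (0 : ℝ) 1 := fun i => by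
      obtain ⟨h₀, h₁⟩ := abs_le.mp (mem_Icc_neg_one_one_iff.mp ht i)
      simp only [Pi.smul_apply, Pi.add_apply, Pi.one_apply, smul_eq_mul, mem_Icc]
      constructor <;> linarith
    convert h _ hd
    ext i
    simp

-- Division by zero makes `tᵢ = 0` where `xᵢ = yᵢ`; any value in `[-1, 1]` works there.
theorem exists_mem_Icc_abs_sub_abs_eq_mul {m : Type*} (x y : m → ℝ) :
    ∃ t ∈ Icc (-1 : m → ℝ) 1, |x| - |y| = t * (x - y) := by
  refine ⟨(|x| - |y|) / (x - y), mem_Icc_neg_one_one_iff.mpr fun i => ?_, funext fun i => ?_⟩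
  · simpa [abs_div] using
      div_le_one_of_le₀ (abs_abs_sub_abs_le_abs_sub (x i) (y i)) (abs_nonneg _)
  · rcases eq_or_ne (x i) (y i) with h | h
    · simp [h]
    · simp [div_mul_cancel₀ _ (sub_ne_zero.mpr h)]

section GAVE

variable {m : Type*} [Fintype m] [DecidableEq m] (A B : Matrix m m ℝ)

theorem Matrix.sub_add_two_smul_mul_diagonal (d : m → ℝ) :
    A - B + (2 : ℝ) • (B * diagonal d) = A + B * diagonal ((2 : ℝ) • d - 1) := by
  ext i j
  simp only [add_apply, sub_apply, smul_apply, mul_diagonal, Pi.sub_apply, Pi.smul_apply,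
    Pi.one_apply, smul_eq_mul]
  ring

theorem Matrix.add_mul_diagonal_mulVec (t v : m → ℝ) :
    (A + B * diagonal t) *ᵥ v = A *ᵥ v + B *ᵥ (t * v) := by
  rw [add_mulVec, ← mulVec_mulVec]
  congr 2
  exact funext (mulVec_diagonal t v)

def gaveMap (x : m → ℝ) : m → ℝ := A *ᵥ x + B *ᵥ |x|

theorem gaveMap_sub_gaveMap (x y : m → ℝ) : ∃ t ∈ Icc (-1 : m → ℝ) 1,
    gaveMap A B x - gaveMap A B y = (A + B * diagonal t) *ᵥ (x - y) := by
  obtain ⟨t, ht, habs⟩ := exists_mem_Icc_abs_sub_abs_eq_mul x y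
  refine ⟨t, ht, ?_⟩
  rw [add_mul_diagonal_mulVec, ← habs, mulVec_sub, mulVec_sub, gaveMap, gaveMap]
  abel

theorem antilipschitzWith_gaveMap {K : ℝ≥0}
    (hK : ∀ t ∈ Icc (-1 : m → ℝ) 1, ∀ v, ‖v‖ ≤ K * ‖(A + B * diagonal t) *ᵥ v‖) :
    AntilipschitzWith K (gaveMap A B) := by
  refine AntilipschitzWith.of_le_mul_dist fun x y => ?_
  obtain ⟨t, ht, h⟩ := gaveMap_sub_gaveMap A B x y
  rw [dist_eq_norm, dist_eq_norm, h]
  exact hK t ht _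

theorem isUnit_add_mul_diagonal_of_injective_gaveMap (hinj : Injective (gaveMap A B))
    {t : m → ℝ} (ht : t ∈ Icc (-1 : m → ℝ) 1) : IsUnit (A + B * diagonal t) := by
  rw [isUnit_iff_isUnit_det, isUnit_iff_ne_zero, Ne, ← exists_mulVec_eq_zero_iff]
  rintro ⟨z, hz, hMz⟩
  set u := z + t * |z|
  set v := -z + t * |-z|
  have hsub : u - v = (2 : ℝ) • z := by
    simp only [u, v, abs_neg]
    module
  have habs : |u| - |v| = (2 : ℝ) • (t * z) := funext fun i => by
    have hti := mem_Icc_neg_one_one_iff.mp ht i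
    have hu : |u i| = |z i| + t i * z i := abs_add_mul_abs_self hti (z i)
    have hv : |v i| = |z i| - t i * z i := by
      simpa [v, abs_neg, ← sub_eq_add_neg] using abs_add_mul_abs_self hti (-z i)
    simp only [Pi.sub_apply, Pi.abs_apply, hu, hv, Pi.smul_apply, Pi.mul_apply, smul_eq_mul]
    ring
  have huv : gaveMap A B u = gaveMap A B v := by
    rw [← sub_eq_zero, gaveMap, gaveMap, add_sub_add_comm, ← mulVec_sub, ← mulVec_sub, hsub,
      habs, mulVec_smul, mulVec_smul, ← smul_add, ← add_mul_diagonal_mulVec, hMz, smul_zero]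
  have h2z : (2 : ℝ) • z = 0 := by rw [← hsub, hinj huv, sub_self]
  exact hz ((smul_eq_zero.mp h2z).resolve_left two_ne_zero)

theorem bijective_gaveMap (hunit : ∀ t ∈ Icc (-1 : m → ℝ) 1, IsUnit (A + B * diagonal t)) :
    Bijective (gaveMap A B) := by
  obtain ⟨K, hK⟩ := exists_norm_le_mul_norm_mulVec (by fun_prop) isCompact_Icc hunit
  have hanti : ∀ s ∈ Icc (0 : ℝ) 1, AntilipschitzWith K (gaveMap A (s • B)) := by
    rintro s ⟨hs₀, hs₁⟩
    refine antilipschitzWith_gaveMap _ _ fun t ht v => ?_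
    have hst : s • t ∈ Icc (-1 : m → ℝ) 1 := mem_Icc_neg_one_one_iff.mpr fun i => by
      simpa [abs_mul, abs_of_nonneg hs₀] using
        mul_le_one₀ hs₁ (abs_nonneg _) (mem_Icc_neg_one_one_iff.mp ht i)
    simpa [smul_mul, mul_smul, diagonal_smul] using hK _ hst v
  refine ⟨by simpa using (hanti 1 ⟨zero_le_one, le_rfl⟩).injective, ?_⟩
  have hA : Surjective (A *ᵥ ·) :=
    mulVec_surjective_iff_isUnit.mpr (by simpa using hunit 0 ⟨by simp, by simp⟩)
  have hhom : ∀ s : ℝ, (A *ᵥ ·) + s • (B *ᵥ |·|) = gaveMap A (s • B) := fun s => by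
    ext1 x
    simp [gaveMap, smul_mulVec]
  exact hA.add_of_antilipschitzWith_add_smul (by simpa only [hhom] using hanti)
    (B.mulVecLin.toContinuousLinearMap.lipschitz.comp lipschitzWith_one_abs_pi)

theorem gaveMap_bijective_iff :
    Bijective (gaveMap A B) ↔ ∀ t ∈ Icc (-1 : m → ℝ) 1, IsUnit (A + B * diagonal t) :=
  ⟨fun h _ ht => isUnit_add_mul_diagonal_of_injective_gaveMap A B h.injective ht,
    bijective_gaveMap A B⟩

end GAVE

theorem stmt9 {n : ℕ} (A B : Matrix (Fin n) (Fin n) ℝ) :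
    (∀ b : Fin n → ℝ, ∃! x : Fin n → ℝ, A *ᵥ x + B *ᵥ |x| = b) ↔
      ∀ d : Fin n → ℝ, (∀ i, d i ∈ Set.Icc (0 : ℝ) 1) →
        IsUnit (A - B + (2 : ℝ) • (B * Matrix.diagonal d)) := by
  calc (∀ b, ∃! x, A *ᵥ x + B *ᵥ |x| = b) ↔ Bijective (gaveMap A B) :=
        (bijective_iff_existsUnique _).symm
    _ ↔ ∀ t ∈ Icc (-1 : Fin n → ℝ) 1, IsUnit (A + B * diagonal t) := gaveMap_bijective_iff A B
    _ ↔ _ := by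
      simp only [sub_add_two_smul_mul_diagonal]
      exact forall_mem_Icc_neg_one_one_iff
end
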